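/- Let γ ∈ S(I) have exactly two orbits V₁ and V₂, and let π be a premap on ±I connecting ±V₁ and ±V₂. Then χ(γ,π) = 2 if and only if for some sign ε ∈ {+1,−1}, π does not connect V₁ ∪ εV₂ to (−V₁) ∪ (−εV₂), and the permutation induced by π on V₁ ∪ εV₂ satisfies the annular-noncrossing count #(π|) + #((γ₊γ₋⁻¹)|⁻¹ π|⁻¹) = |I|. -/

import Mathlib

def IsPremap (π : Equiv.Perm ℤ) : Prop :=
  (Equiv.neg ℤ) * π * (Equiv.neg ℤ) = π⁻¹ ∧
    ∀ k : ℤ, k ≠ 0 → ∀ m : ℤ, (π ^ m) k ≠ -k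

/-- `γ₋ = δ γ δ`, where `δ : k ↦ -k`. -/
def permMinus (γ : Equiv.Perm ℤ) : Equiv.Perm ℤ :=
  (Equiv.neg ℤ) * γ * (Equiv.neg ℤ)

/-- The number of orbits of `σ` meeting the set `S`. -/
noncomputable def orbitCountOn (σ : Equiv.Perm ℤ) (S : Set ℤ) : ℕ :=
  Nat.card (Quot (fun a b : S => σ.SameCycle a b))

/-- The set `±I = I ∪ (-I)`. -/
def pmSet (I : Finset ℤ) : Set ℤ := {k : ℤ | k ∈ I ∨ -k ∈ I}

/-- The Euler characteristic
`χ(γ,π) = #(γ₊γ₋⁻¹)/2 + #(π)/2 + #(γ₊⁻¹π⁻¹γ₋)/2 − |I|`,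
all orbits counted on `±I`. -/
noncomputable def chi (I : Finset ℤ) (γ π : Equiv.Perm ℤ) : ℚ :=
  (orbitCountOn (γ * (permMinus γ)⁻¹) (pmSet I) : ℚ) / 2 +
    (orbitCountOn π (pmSet I) : ℚ) / 2 +
    (orbitCountOn (γ⁻¹ * π⁻¹ * permMinus γ) (pmSet I) : ℚ) / 2 - I.card

/-!
Write `ρ = γ₊γ₋⁻¹` and `τ = ρ⁻¹π⁻¹`. On `±I` the orbits of `ρ` are exactly `±V₁` and `±V₂`, and
conjugation by `γ₋` turns `γ₊⁻¹π⁻¹γ₋` into `τ`, so `χ(γ,π) = 2` iff `#(π) + #(τ) = 2|I|`.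

Since `τπ = ρ⁻¹`, the genus inequality `#(τ) + #(π) + #(τπ) ≤ 2|I| + 2c`, where `c` counts the
orbits of the group `⟨τ, π⟩` on `±I`, turns `#(π) + #(τ) = 2|I|` into `c ≥ 2`. Negation permutes
these orbits, and since `π` connects `±V₁` with `±V₂`, the orbit of `V₁` contains `A = V₁ ∪ εV₂`
for some sign `ε`. If `π` connected `A` with `−A`, this orbit would be closed under negation and
hence be all of `±I`.

Conversely, if `π` does not connect `A` with `−A`, then `π` and `τ` preserve `A` and `−A`, and
negation (followed, for `τ`, by conjugation with `ρ`) matches their orbits on `−A` with those on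
`A`, so both orbit counts on `±I` are twice those on `A`.
-/

open Equiv Function Pointwise

/-! ### Classes of a relation on a subset -/

section ClassCount

variable {α β : Type*} {r r' : α → α → Prop} {S T : Set α} {x y a b : α}

/-- For an equivalence `r`, the equivalence obtained by merging the classes of `x` and `y`. -/
def mergeRel (r : α → α → Prop) (x y a b : α) : Prop :=
  r a b ∨ (r a x ∧ r y b) ∨ (r a y ∧ r x b)

theorem Equivalence.mergeRel (hr : Equivalence r) (x y : α) :
    Equivalence (_root_.mergeRel r x y) := by
  refine ⟨fun a => Or.inl (hr.refl a), ?_, ?_⟩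
  · rintro a b (h | ⟨h₁, h₂⟩ | ⟨h₁, h₂⟩)
    exacts [Or.inl (hr.symm h), Or.inr (Or.inr ⟨hr.symm h₂, hr.symm h₁⟩),
      Or.inr (Or.inl ⟨hr.symm h₂, hr.symm h₁⟩)]
  · rintro a b c (h | ⟨h₁, h₂⟩ | ⟨h₁, h₂⟩) (h' | ⟨h₁', h₂'⟩ | ⟨h₁', h₂'⟩)
    exacts [Or.inl (hr.trans h h'), Or.inr (Or.inl ⟨hr.trans h h₁', h₂'⟩),
      Or.inr (Or.inr ⟨hr.trans h h₁', h₂'⟩), Or.inr (Or.inl ⟨h₁, hr.trans h₂ h'⟩),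
      Or.inl (hr.trans h₁ (hr.trans (hr.symm (hr.trans h₂ h₁')) h₂')), Or.inl (hr.trans h₁ h₂'),
      Or.inr (Or.inr ⟨h₁, hr.trans h₂ h'⟩), Or.inl (hr.trans h₁ h₂'),
      Or.inl (hr.trans h₁ (hr.trans (hr.symm (hr.trans h₂ h₁')) h₂'))]

theorem mergeRel_of_rel (h : r a b) : mergeRel r x y a b := Or.inl h

theorem mergeRel_left_right (hr : Equivalence r) : mergeRel r x y x y :=
  Or.inr (Or.inl ⟨hr.refl x, hr.refl y⟩)

theorem mergeRel_le {R : α → α → Prop} (hR : Equivalence R) (hrR : ∀ a b, r a b → R a b)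
    (hxy : R x y) : mergeRel r x y a b → R a b := by
  rintro (h | ⟨h₁, h₂⟩ | ⟨h₁, h₂⟩)
  exacts [hrR _ _ h, hR.trans (hrR _ _ h₁) (hR.trans hxy (hrR _ _ h₂)),
    hR.trans (hrR _ _ h₁) (hR.trans (hR.symm hxy) (hrR _ _ h₂))]

theorem Equivalence.rel_swap_apply [DecidableEq α] {R : α → α → Prop} (hR : Equivalence R)
    (hxy : R x y) (u : α) : R u (swap x y u) := by
  rcases eq_or_ne u x with rfl | hux
  · rwa [swap_apply_left]
  rcases eq_or_ne u y with rfl | huy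
  · rw [swap_apply_right]; exact hR.symm hxy
  rw [swap_apply_of_ne_of_ne hux huy]; exact hR.refl u

noncomputable def classCount (r : α → α → Prop) (S : Set α) : ℕ :=
  Nat.card (Quot fun a b : S => r a b)

theorem Equivalence.quot_mk_subtype_eq_iff (hr : Equivalence r) (a b : S) :
    Quot.mk (fun a b : S => r a b) a = Quot.mk _ b ↔ r a b :=
  (hr.comap Subtype.val).quot_mk_eq_iff a b

theorem classCount_congr (h : ∀ a ∈ S, ∀ b ∈ S, r a b ↔ r' a b) :
    classCount r S = classCount r' S := by
  have : (fun a b : S => r a b) = fun a b : S => r' a b :=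
    funext fun a => funext fun b => propext (h a a.2 b b.2)
  simp only [classCount, this]

theorem classCount_image {r' : β → β → Prop} (e : α ≃ β)
    (h : ∀ a ∈ S, ∀ b ∈ S, r' (e a) (e b) ↔ r a b) : classCount r' (e '' S) = classCount r S :=
  (Nat.card_congr (Quot.congr (Equiv.Set.image e S e.injective)
    fun a b => (h a a.2 b b.2).symm)).symm

theorem classCount_eq_one (hne : S.Nonempty) (h : ∀ a ∈ S, ∀ b ∈ S, r a b) :
    classCount r S = 1 := by
  obtain ⟨x, hx⟩ := hne
  refine Nat.card_eq_one_iff_unique.2 ⟨⟨?_⟩, ⟨Quot.mk _ ⟨x, hx⟩⟩⟩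
  rintro ⟨a⟩ ⟨b⟩
  exact Quot.sound (h a a.2 b b.2)

theorem classCount_union (hr : Equivalence r) (hS : S.Finite) (hT : T.Finite)
    (hST : ∀ a ∈ S, ∀ b ∈ T, ¬r a b) : classCount r (S ∪ T) = classCount r S + classCount r T := by
  have : Finite S := hS
  have : Finite T := hT
  let f : (Quot fun a b : S => r a b) ⊕ (Quot fun a b : T => r a b) →
      Quot fun a b : ↥(S ∪ T) => r a b :=
    Sum.elim (Quot.map (Set.inclusion Set.subset_union_left) fun _ _ => id)
      (Quot.map (Set.inclusion Set.subset_union_right) fun _ _ => id)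
  have hf : Bijective f := by
    refine ⟨?_, ?_⟩
    · have key : ∀ a b : ↥(S ∪ T), Quot.mk (fun a b : ↥(S ∪ T) => r a b) a = Quot.mk _ b →
          r a b := fun a b => (hr.quot_mk_subtype_eq_iff a b).1
      rintro (a | a) (b | b) hab <;> obtain ⟨a⟩ := a <;> obtain ⟨b⟩ := b
      · exact congrArg Sum.inl (Quot.sound (key _ _ hab))
      · exact (hST a a.2 b b.2 (key _ _ hab)).elim
      · exact (hST b b.2 a a.2 (hr.symm (key _ _ hab))).elim
      · exact congrArg Sum.inr (Quot.sound (key _ _ hab))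
    · rintro ⟨⟨a, ha | ha⟩⟩
      exacts [⟨Sum.inl (Quot.mk _ ⟨a, ha⟩), rfl⟩, ⟨Sum.inr (Quot.mk _ ⟨a, ha⟩), rfl⟩]
  rw [classCount, ← Nat.card_eq_of_bijective f hf, Nat.card_sum, classCount, classCount]

theorem classCount_eq_classCount_mergeRel_add_one (hr : Equivalence r) (hS : S.Finite)
    (hx : x ∈ S) (hy : y ∈ S) (hxy : ¬r x y) :
    classCount r S = classCount (mergeRel r x y) S + 1 := by
  classical
  have : Finite S := hS
  let qy : Quot fun a b : S => r a b := Quot.mk _ ⟨y, hy⟩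
  let f : {q // q ≠ qy} → Quot fun a b : S => mergeRel r x y a b :=
    fun q => Quot.map id (fun _ _ => mergeRel_of_rel) q.1
  have hf : Bijective f := by
    refine ⟨?_, ?_⟩
    · rintro ⟨⟨a⟩, ha⟩ ⟨⟨b⟩, hb⟩ hab
      refine Subtype.ext ?_
      rcases ((hr.mergeRel x y).quot_mk_subtype_eq_iff _ _).1 hab with h | ⟨-, h⟩ | ⟨h, -⟩
      · exact Quot.sound h
      · exact (hb (Quot.sound (hr.symm h))).elim
      · exact (ha (Quot.sound h)).elim
    · rintro ⟨a⟩
      by_cases hay : r a y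
      · refine ⟨⟨Quot.mk _ ⟨x, hx⟩, fun h => hxy ((hr.quot_mk_subtype_eq_iff _ _).1 h)⟩, ?_⟩
        exact Quot.sound (Or.inr (Or.inl ⟨hr.refl x, hr.symm hay⟩))
      · exact ⟨⟨Quot.mk _ a, fun h => hay ((hr.quot_mk_subtype_eq_iff _ _).1 h)⟩, rfl⟩
  rw [classCount, classCount, ← Nat.card_eq_of_bijective f hf,
    ← Nat.card_congr (Equiv.optionSubtypeNe qy), Nat.card_congr (Equiv.optionEquivSumPUnit.{0} _),
    Nat.card_sum, Nat.card_unique (α := PUnit.{1})]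

theorem classCount_mergeRel_of_rel (hr : Equivalence r) (hxy : r x y) :
    classCount (mergeRel r x y) S = classCount r S :=
  classCount_congr fun _ _ _ _ => ⟨mergeRel_le hr (fun _ _ => id) hxy, mergeRel_of_rel⟩

theorem classCount_le_classCount_mergeRel_add_one (hr : Equivalence r) (hS : S.Finite)
    (hx : x ∈ S) (hy : y ∈ S) : classCount r S ≤ classCount (mergeRel r x y) S + 1 := by
  by_cases hxy : r x y
  · rw [classCount_mergeRel_of_rel hr hxy]; omega
  · rw [classCount_eq_classCount_mergeRel_add_one hr hS hx hy hxy]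

end ClassCount

namespace Equiv.Perm

variable {α : Type*} {σ τ : Perm α} {S : Set α} {x y : α}

def FixesOutside (σ : Perm α) (S : Set α) : Prop := ∀ x ∉ S, σ x = x

namespace FixesOutside

theorem apply_mem (h : FixesOutside σ S) (hx : x ∈ S) : σ x ∈ S := by
  by_contra hσx
  exact hσx (by rwa [σ.injective (h _ hσx)])

theorem apply_mem_iff (h : FixesOutside σ S) (x : α) : σ x ∈ S ↔ x ∈ S := by
  refine ⟨fun hσx => ?_, h.apply_mem⟩
  by_contra hx
  exact hx (h x hx ▸ hσx)

theorem mono {T : Set α} (h : FixesOutside σ S) (hST : S ⊆ T) : FixesOutside σ T :=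
  fun x hx => h x fun hxS => hx (hST hxS)

theorem inv (h : FixesOutside σ S) : FixesOutside σ⁻¹ S :=
  fun x hx => inv_eq_iff_eq.2 (h x hx).symm

theorem mul (hσ : FixesOutside σ S) (hτ : FixesOutside τ S) : FixesOutside (σ * τ) S :=
  fun x hx => by rw [mul_apply, hτ x hx, hσ x hx]

theorem swap [DecidableEq α] (hx : x ∈ S) (hy : y ∈ S) : FixesOutside (swap x y) S :=
  fun z hz => swap_apply_of_ne_of_ne (by rintro rfl; exact hz hx) (by rintro rfl; exact hz hy)

theorem image_eq (h : FixesOutside σ S) : σ '' S = S := by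
  refine Set.Subset.antisymm (Set.image_subset_iff.2 fun x => h.apply_mem) fun x hx => ?_
  exact ⟨σ⁻¹ x, h.inv.apply_mem hx, σ.apply_symm_apply x⟩

theorem isOfFinOrder (hS : S.Finite) (h : FixesOutside σ S) : IsOfFinOrder σ := by
  classical
  have : Finite S := hS
  rw [← ofSubtype_subtypePerm h.apply_mem_iff fun x hσx => not_imp_comm.1 (h x) hσx]
  exact ofSubtype.isOfFinOrder (isOfFinOrder_of_finite _)

end FixesOutside

theorem sameCycle_iff_exists_pow_eq (hσ : IsOfFinOrder σ) :
    σ.SameCycle x y ↔ ∃ n : ℕ, (σ ^ n) x = y := by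
  refine ⟨fun ⟨i, hi⟩ => ?_, fun ⟨n, hn⟩ => ⟨n, by simpa using hn⟩⟩
  obtain ⟨n, hn⟩ := (Submonoid.mem_powers_iff _ _).1
    (hσ.mem_powers_iff_mem_zpowers.2 (Subgroup.mem_zpowers_iff.2 ⟨i, rfl⟩))
  exact ⟨n, by rw [hn, hi]⟩

theorem SameCycle.rel_of_forall_rel_apply {R : α → α → Prop} (hR : Equivalence R)
    (hstep : ∀ u, R u (σ u)) (h : σ.SameCycle x y) : R x y := by
  obtain ⟨n, rfl⟩ := h
  induction n using Int.induction_on with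
  | zero => exact hR.refl x
  | succ n ih => rw [add_comm, zpow_add, zpow_one, mul_apply]; exact hR.trans ih (hstep _)
  | pred n ih =>
    rw [sub_eq_neg_add, zpow_add, zpow_neg_one, mul_apply]
    have := hstep (σ⁻¹ ((σ ^ (-(n : ℤ))) x))
    rw [coe_inv, apply_symm_apply] at this
    exact hR.trans ih (hR.symm this)

theorem SameCycle.mem_iff_mem {B : Set α} (hB : ∀ u, σ u ∈ B ↔ u ∈ B)
    (h : σ.SameCycle x y) : x ∈ B ↔ y ∈ B :=
  h.rel_of_forall_rel_apply (R := fun u v => u ∈ B ↔ v ∈ B) ⟨fun _ => Iff.rfl, Iff.symm, Iff.trans⟩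
    fun u => (hB u).symm

theorem sameCycle_iff_of_eqOn {B : Set α} (hσ : ∀ u, σ u ∈ B ↔ u ∈ B)
    (hτ : ∀ u, τ u ∈ B ↔ u ∈ B) (heq : Set.EqOn σ τ B) (hx : x ∈ B) (hy : y ∈ B) :
    σ.SameCycle x y ↔ τ.SameCycle x y := by
  have : σ.subtypePerm hσ = τ.subtypePerm hτ := ext fun u => Subtype.ext (heq u.2)
  rw [← sameCycle_subtypePerm (h := hσ) (x := ⟨x, hx⟩) (y := ⟨y, hy⟩), this,
    sameCycle_subtypePerm]

theorem minimalPeriod_pos_of_isOfFinOrder (hσ : IsOfFinOrder σ) (x : α) :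
    0 < minimalPeriod σ x := by
  refine IsPeriodicPt.minimalPeriod_pos hσ.orderOf_pos ?_
  rw [IsPeriodicPt, IsFixedPt, ← coe_pow, pow_orderOf_eq_one, one_apply]

theorem inv_apply_mem_iff {B : Set α} (h : ∀ x, σ x ∈ B ↔ x ∈ B) (x : α) :
    σ⁻¹ x ∈ B ↔ x ∈ B := by
  rw [← h, coe_inv, apply_symm_apply]

theorem apply_mem_iff_of_mapsTo {B : Set α} (h : ∀ x ∈ B, σ x ∈ B) (h' : ∀ x ∈ B, σ⁻¹ x ∈ B)
    (x : α) : σ x ∈ B ↔ x ∈ B :=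
  ⟨fun hx => by simpa using h' _ hx, h x⟩

theorem image_eq_of_apply_mem_iff {B : Set α} (h : ∀ x, σ x ∈ B ↔ x ∈ B) : σ '' B = B :=
  Set.Subset.antisymm (Set.image_subset_iff.2 fun x => (h x).2)
    fun x hx => ⟨σ⁻¹ x, (inv_apply_mem_iff h x).2 hx, σ.apply_symm_apply x⟩

theorem classCount_conj (g σ : Perm α) (S : Set α) :
    classCount (g * σ * g⁻¹).SameCycle (g '' S) = classCount σ.SameCycle S :=
  classCount_image g fun a _ b _ => by simp [sameCycle_conj]

theorem classCount_inv (σ : Perm α) (S : Set α) :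
    classCount σ⁻¹.SameCycle S = classCount σ.SameCycle S :=
  classCount_congr fun _ _ _ _ => sameCycle_inv

theorem classCount_one (S : Set α) : classCount (1 : Perm α).SameCycle S = Nat.card S := by
  refine (Nat.card_eq_of_bijective (Quot.mk _) ⟨fun a b hab => ?_, Quot.exists_rep⟩).symm
  exact Subtype.ext (sameCycle_one.1 (((SameCycle.equivalence 1).quot_mk_subtype_eq_iff a b).1 hab))

theorem classCount_image_of_conj_eq {δ g : Perm α} (hconj : δ⁻¹ * σ * δ = g * σ⁻¹ * g⁻¹)
    (hg : g '' S = S) : classCount σ.SameCycle (δ '' S) = classCount σ.SameCycle S := by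
  rw [← classCount_conj δ⁻¹, inv_inv, hconj, coe_inv, symm_image_image, ← hg, classCount_conj,
    hg, classCount_inv]

/-! ### Transpositions -/

section Swap

variable [DecidableEq α]

theorem swap_mul_pow_apply {k : ℕ}
    (hk : ∀ j, 0 < j → j < k → (σ ^ j) x ≠ x ∧ (σ ^ j) x ≠ y) {j : ℕ} (hj : 0 < j)
    (hjk : j ≤ k) : ((swap x y * σ) ^ j) x = swap x y ((σ ^ j) x) := by
  induction j with
  | zero => omega
  | succ j ih =>
    rcases Nat.eq_zero_or_pos j with rfl | hj0
    · simp
    · obtain ⟨hx, hy⟩ := hk j hj0 (by omega)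
      rw [pow_succ', mul_apply, ih hj0 (by omega), swap_apply_of_ne_of_ne hx hy, mul_apply,
        pow_succ', mul_apply]

theorem sameCycle_swap_mul_of_not_sameCycle (hσ : IsOfFinOrder σ) (h : ¬σ.SameCycle x y) :
    (swap x y * σ).SameCycle x y := by
  have hm := minimalPeriod_pos_of_isOfFinOrder hσ x
  have hwalk : ∀ j, 0 < j → j < minimalPeriod σ x → (σ ^ j) x ≠ x ∧ (σ ^ j) x ≠ y :=
    fun j hj hjm => ⟨by rw [coe_pow]; exact not_isPeriodicPt_of_pos_of_lt_minimalPeriod hj.ne' hjm,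
      fun hjy => h ⟨j, by simpa using hjy⟩⟩
  refine ⟨minimalPeriod σ x, ?_⟩
  rw [zpow_natCast, swap_mul_pow_apply hwalk hm le_rfl, coe_pow, iterate_minimalPeriod,
    swap_apply_left]

theorem not_sameCycle_swap_mul_of_sameCycle (hσ : IsOfFinOrder σ)
    (hτ : IsOfFinOrder (swap x y * σ)) (hxy : x ≠ y) (h : σ.SameCycle x y) :
    ¬(swap x y * σ).SameCycle x y := by
  obtain ⟨n, hn⟩ := (sameCycle_iff_exists_pow_eq hσ).1 h
  set m := minimalPeriod σ x
  set k := n % m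
  have hm : 0 < m := minimalPeriod_pos_of_isOfFinOrder hσ x
  have hkm : k < m := Nat.mod_lt n hm
  have hky : (σ ^ k) x = y := by rw [coe_pow, iterate_mod_minimalPeriod_eq, ← coe_pow, hn]
  have hk : 0 < k := Nat.pos_of_ne_zero fun hk0 => hxy (by simpa [hk0] using hky)
  have hwalk : ∀ j, 0 < j → j < k → (σ ^ j) x ≠ x ∧ (σ ^ j) x ≠ y := by
    refine fun j hj hjk => ⟨by
      rw [coe_pow]; exact not_isPeriodicPt_of_pos_of_lt_minimalPeriod hj.ne' (hjk.trans hkm),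
      fun hjy => ?_⟩
    have := iterate_injOn_Iio_minimalPeriod (f := σ) (x := x) (hjk.trans hkm) hkm
      (by simpa [← coe_pow] using hjy.trans hky.symm)
    omega
  have hper : IsPeriodicPt (swap x y * σ) k x := by
    rw [IsPeriodicPt, IsFixedPt, ← coe_pow, swap_mul_pow_apply hwalk hk le_rfl, hky,
      swap_apply_right]
  intro hτxy
  obtain ⟨n', hn'⟩ := (sameCycle_iff_exists_pow_eq hτ).1 hτxy
  have hjy : ((swap x y * σ) ^ (n' % k)) x = y := by
    rw [coe_pow, hper.iterate_mod_apply, ← coe_pow, hn']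
  rcases Nat.eq_zero_or_pos (n' % k) with h0 | h0
  · exact hxy (by simpa [h0] using hjy)
  · rw [swap_mul_pow_apply hwalk h0 (Nat.mod_lt n' hk).le,
      swap_apply_of_ne_of_ne (hwalk _ h0 (Nat.mod_lt n' hk)).1 (hwalk _ h0 (Nat.mod_lt n' hk)).2]
      at hjy
    exact (hwalk _ h0 (Nat.mod_lt n' hk)).2 hjy

theorem mergeRel_sameCycle_of_sameCycle_swap_mul {a b : α}
    (h : (swap x y * σ).SameCycle a b) : mergeRel σ.SameCycle x y a b := by
  have hR := (SameCycle.equivalence σ).mergeRel x y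
  refine h.rel_of_forall_rel_apply hR fun u => hR.trans (mergeRel_of_rel ⟨1, rfl⟩) ?_
  exact hR.rel_swap_apply (mergeRel_left_right (SameCycle.equivalence σ)) _

theorem mergeRel_sameCycle_swap_mul_iff {a b : α} :
    mergeRel (swap x y * σ).SameCycle x y a b ↔ mergeRel σ.SameCycle x y a b := by
  refine ⟨mergeRel_le ((SameCycle.equivalence σ).mergeRel x y)
    (fun _ _ => mergeRel_sameCycle_of_sameCycle_swap_mul)
    (mergeRel_left_right (SameCycle.equivalence σ)),
    mergeRel_le ((SameCycle.equivalence _).mergeRel x y) (fun _ _ h => ?_)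
    (mergeRel_left_right (SameCycle.equivalence _))⟩
  apply mergeRel_sameCycle_of_sameCycle_swap_mul
  rwa [swap_mul_self_mul]

theorem classCount_swap_mul_of_sameCycle (hS : S.Finite) (hσ : FixesOutside σ S) (hx : x ∈ S)
    (hy : y ∈ S) (hxy : x ≠ y) (h : σ.SameCycle x y) :
    classCount (swap x y * σ).SameCycle S = classCount σ.SameCycle S + 1 := by
  have hτ : FixesOutside (swap x y * σ) S := (FixesOutside.swap hx hy).mul hσ
  rw [classCount_eq_classCount_mergeRel_add_one (SameCycle.equivalence _) hS hx hy
      (not_sameCycle_swap_mul_of_sameCycle (hσ.isOfFinOrder hS) (hτ.isOfFinOrder hS) hxy h),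
    classCount_congr fun _ _ _ _ => mergeRel_sameCycle_swap_mul_iff,
    classCount_mergeRel_of_rel (SameCycle.equivalence σ) h]

theorem classCount_swap_mul_add_one_of_not_sameCycle (hS : S.Finite) (hσ : FixesOutside σ S)
    (hx : x ∈ S) (hy : y ∈ S) (hxy : x ≠ y) (h : ¬σ.SameCycle x y) :
    classCount (swap x y * σ).SameCycle S + 1 = classCount σ.SameCycle S := by
  have := classCount_swap_mul_of_sameCycle hS ((FixesOutside.swap hx hy).mul hσ) hx hy hxy
    (sameCycle_swap_mul_of_not_sameCycle (hσ.isOfFinOrder hS) h)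
  rwa [swap_mul_self_mul, eq_comm] at this

end Swap

/-! ### The genus inequality -/

def jointRel (σ τ : Perm α) : α → α → Prop :=
  Relation.EqvGen fun u v => σ u = v ∨ τ u = v

theorem jointRel_equivalence (σ τ : Perm α) : Equivalence (jointRel σ τ) :=
  Relation.EqvGen.is_equivalence _

theorem jointRel_apply_left (u : α) : jointRel σ τ u (σ u) := .rel _ _ (Or.inl rfl)

theorem jointRel_apply_right (u : α) : jointRel σ τ u (τ u) := .rel _ _ (Or.inr rfl)

theorem jointRel_le {R : α → α → Prop} (hR : Equivalence R) (hσ : ∀ u, R u (σ u))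
    (hτ : ∀ u, R u (τ u)) {a b : α} (h : jointRel σ τ a b) : R a b := by
  induction h with
  | rel u v h => rcases h with rfl | rfl; exacts [hσ u, hτ u]
  | refl u => exact hR.refl u
  | symm _ _ _ ih => exact hR.symm ih
  | trans _ _ _ _ _ ih₁ ih₂ => exact hR.trans ih₁ ih₂

theorem SameCycle.jointRel_left {a b : α} (h : σ.SameCycle a b) : jointRel σ τ a b :=
  h.rel_of_forall_rel_apply (jointRel_equivalence σ τ) jointRel_apply_left

theorem SameCycle.jointRel_right {a b : α} (h : τ.SameCycle a b) : jointRel σ τ a b :=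
  h.rel_of_forall_rel_apply (jointRel_equivalence σ τ) jointRel_apply_right

theorem jointRel_one_right {a b : α} : jointRel σ 1 a b ↔ σ.SameCycle a b :=
  ⟨jointRel_le (SameCycle.equivalence σ) (fun _ => ⟨1, rfl⟩) (SameCycle.refl σ),
    SameCycle.jointRel_left⟩

theorem SameCycle.jointRel_inv_mul_inv {ρ π : Perm α} {a b : α} (h : ρ.SameCycle a b) :
    jointRel (ρ⁻¹ * π⁻¹) π a b := by
  have hJ := jointRel_equivalence (ρ⁻¹ * π⁻¹) π
  refine (sameCycle_inv.2 h).rel_of_forall_rel_apply hJ fun u => hJ.trans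
    (jointRel_apply_right u) ?_
  simpa using jointRel_apply_left (σ := ρ⁻¹ * π⁻¹) (τ := π) (π u)

theorem jointRel_iff_mergeRel_jointRel_mul_swap [DecidableEq α] (hxy : jointRel σ τ x y)
    {a b : α} :
    jointRel σ τ a b ↔ mergeRel (jointRel (σ * swap x y) (swap x y * τ)) x y a b := by
  have hJ := jointRel_equivalence σ τ
  have hM := (jointRel_equivalence (σ * swap x y) (swap x y * τ)).mergeRel x y
  have hMxy := mergeRel_left_right (x := x) (y := y)
    (jointRel_equivalence (σ * swap x y) (swap x y * τ))
  refine ⟨jointRel_le hM (fun u => ?_) (fun u => ?_), mergeRel_le hJ (fun _ _ => jointRel_le hJ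
    (fun u => hJ.trans (hJ.rel_swap_apply hxy u) (jointRel_apply_left _))
    (fun u => hJ.trans (jointRel_apply_right u) (hJ.rel_swap_apply hxy _))) hxy⟩
  · have := mergeRel_of_rel (x := x) (y := y) (jointRel_apply_left (σ := σ * swap x y)
      (τ := swap x y * τ) (swap x y u))
    rw [mul_apply, swap_apply_self] at this
    exact hM.trans (hM.rel_swap_apply hMxy u) this
  · have := hM.rel_swap_apply hMxy ((swap x y * τ) u)
    rw [mul_apply, swap_apply_self] at this
    exact hM.trans (mergeRel_of_rel (jointRel_apply_right u)) this

theorem ncard_moved_swap_mul_lt [DecidableEq α] (hS : S.Finite) {b : α} (hb : b ∈ S)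
    (hτb : τ b ≠ b) : {u ∈ S | (swap b (τ b) * τ) u ≠ u}.ncard < {u ∈ S | τ u ≠ u}.ncard := by
  have hsub : {u ∈ S | (swap b (τ b) * τ) u ≠ u} ⊆ {u ∈ S | τ u ≠ u} := by
    refine fun u ⟨hu, hmov⟩ => ⟨hu, fun hfix => hmov ?_⟩
    rw [mul_apply, hfix]
    refine swap_apply_of_ne_of_ne (by rintro rfl; exact hτb hfix) fun hu => hτb ?_
    rw [hu] at hfix
    exact τ.injective hfix
  refine Set.ncard_lt_ncard ((Set.ssubset_iff_of_subset hsub).2 ⟨b, ⟨hb, hτb⟩, ?_⟩)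
    (hS.subset fun u hu => hu.1)
  rintro ⟨-, hmov⟩
  exact hmov (by rw [mul_apply, swap_apply_right])

/-- The move `(σ, τ) ↦ (σt, tτ)` with `t = (b τb)` keeps `στ`, splits a cycle of `τ`, changes the
number of cycles of `σ` by one and the number of joint orbits by at most one; when the cycles of
`σ` merge, `b` and `τ b` already lie in one joint orbit of `(σt, tτ)`. -/
theorem classCount_add_add_le_of_mul_swap [DecidableEq α] (hS : S.Finite)
    (hσ : FixesOutside σ S) (hτ : FixesOutside τ S) {b : α} (hb : b ∈ S) (hτb : τ b ≠ b)
    (h : classCount (σ * swap b (τ b)).SameCycle S + classCount (swap b (τ b) * τ).SameCycle S +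
        classCount (σ * τ).SameCycle S ≤
      Nat.card S + 2 * classCount (jointRel (σ * swap b (τ b)) (swap b (τ b) * τ)) S) :
    classCount σ.SameCycle S + classCount τ.SameCycle S + classCount (σ * τ).SameCycle S ≤
      Nat.card S + 2 * classCount (jointRel σ τ) S := by
  set t := swap b (τ b)
  have hτb' : τ b ∈ S := hτ.apply_mem hb
  have hne : b ≠ τ b := hτb.symm
  have hτ' : classCount (t * τ).SameCycle S = classCount τ.SameCycle S + 1 :=
    classCount_swap_mul_of_sameCycle hS hτ hb hτb' hne ⟨1, rfl⟩
  have hJ : classCount (jointRel σ τ) S =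
      classCount (mergeRel (jointRel (σ * t) (t * τ)) b (τ b)) S :=
    classCount_congr fun _ _ _ _ =>
      jointRel_iff_mergeRel_jointRel_mul_swap (jointRel_apply_right b)
  have hσinv : (σ * t)⁻¹ = t * σ⁻¹ := by rw [mul_inv_rev, swap_inv]
  by_cases hσb : σ⁻¹.SameCycle b (τ b)
  · have hσ' : classCount (σ * t).SameCycle S = classCount σ.SameCycle S + 1 := by
      rw [← classCount_inv, hσinv, classCount_swap_mul_of_sameCycle hS hσ.inv hb hτb' hne hσb,
        classCount_inv]
    have := classCount_le_classCount_mergeRel_add_one (jointRel_equivalence (σ * t) (t * τ)) hS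
      hb hτb'
    omega
  · have hσ' : classCount (σ * t).SameCycle S + 1 = classCount σ.SameCycle S := by
      rw [← classCount_inv, hσinv,
        classCount_swap_mul_add_one_of_not_sameCycle hS hσ.inv hb hτb' hne hσb, classCount_inv]
    have hJ' : jointRel (σ * t) (t * τ) b (τ b) := by
      refine SameCycle.jointRel_left (sameCycle_inv.1 ?_)
      rw [hσinv]
      exact sameCycle_swap_mul_of_not_sameCycle (hσ.inv.isOfFinOrder hS) hσb
    rw [classCount_mergeRel_of_rel (jointRel_equivalence _ _) hJ'] at hJ
    omega

/-- Nonnegativity of the genus in Euler's formula `#σ + #τ + #(στ) = |S| + 2c - 2g` for the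
hypermap `(σ, τ)` on `S` with `c` connected components. -/
theorem classCount_add_add_le (hS : S.Finite) (hσ : FixesOutside σ S)
    (hτ : FixesOutside τ S) :
    classCount σ.SameCycle S + classCount τ.SameCycle S + classCount (σ * τ).SameCycle S ≤
      Nat.card S + 2 * classCount (jointRel σ τ) S := by
  classical
  induction hn : {u ∈ S | τ u ≠ u}.ncard using Nat.strong_induction_on generalizing σ τ with
  | _ n ih =>
  by_cases hmoved : ∃ b ∈ S, τ b ≠ b
  · obtain ⟨b, hb, hτb⟩ := hmoved
    have ht : FixesOutside (swap b (τ b)) S := .swap hb (hτ.apply_mem hb)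
    refine classCount_add_add_le_of_mul_swap hS hσ hτ hb hτb ?_
    have := ih _ (hn ▸ ncard_moved_swap_mul_lt hS hb hτb) (hσ.mul ht) (ht.mul hτ) rfl
    rwa [mul_assoc, swap_mul_self_mul] at this
  · push Not at hmoved
    obtain rfl : τ = 1 := ext fun u => by
      by_cases hu : u ∈ S
      exacts [hmoved u hu, hτ u hu]
    rw [mul_one, classCount_one, classCount_congr (r' := σ.SameCycle) fun _ _ _ _ =>
      jointRel_one_right]
    omega

end Equiv.Perm

/-! ### Premaps on `±I` -/

section TwoOrbits

open Equiv.Perm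

variable {I V₁ V₂ : Finset ℤ} {γ π : Perm ℤ} {k : ℤ}

def signedUnion (V₁ V₂ : Finset ℤ) (ε : ℤ) : Set ℤ := {k | k ∈ V₁ ∨ ε * k ∈ V₂}

theorem orbitCountOn_eq_classCount (σ : Perm ℤ) (S : Set ℤ) :
    orbitCountOn σ S = classCount σ.SameCycle S := rfl

theorem permMinus_apply (γ : Perm ℤ) (k : ℤ) : permMinus γ k = -γ (-k) := rfl

theorem permMinus_inv_apply (γ : Perm ℤ) (k : ℤ) : (permMinus γ)⁻¹ k = -γ⁻¹ (-k) := by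
  simp [permMinus]

theorem neg_mul_mul_permMinus_inv_mul_neg (γ : Perm ℤ) :
    Equiv.neg ℤ * (γ * (permMinus γ)⁻¹) * Equiv.neg ℤ = (γ * (permMinus γ)⁻¹)⁻¹ := by
  ext k
  simp [permMinus]

theorem neg_apply_of_neg_conj {σ : Perm ℤ} (h : Equiv.neg ℤ * σ * Equiv.neg ℤ = σ⁻¹) (k : ℤ) :
    -σ k = σ⁻¹ (-k) := by
  rw [← h]
  simp

theorem neg_inv_apply_of_neg_conj {σ : Perm ℤ} (h : Equiv.neg ℤ * σ * Equiv.neg ℤ = σ⁻¹)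
    (k : ℤ) : -σ⁻¹ k = σ (-k) := by
  rw [← neg_neg k, ← neg_apply_of_neg_conj h, neg_neg, neg_neg]

theorem neg_notMem_of_pos (hI : ∀ k ∈ I, 0 < k) (hk : k ∈ I) : -k ∉ I := fun h => by
  have := hI k hk
  have := hI _ h
  omega

theorem pmSet_eq (I : Finset ℤ) : pmSet I = ↑I ∪ -↑I := rfl

theorem finite_pmSet (I : Finset ℤ) : (pmSet I).Finite :=
  I.finite_toSet.union I.finite_toSet.neg

theorem disjoint_neg_of_pos (hI : ∀ k ∈ I, 0 < k) : Disjoint (↑I : Set ℤ) (-↑I) :=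
  Set.disjoint_left.2 fun _ hk hk' => neg_notMem_of_pos hI hk hk'

theorem card_pmSet (hI : ∀ k ∈ I, 0 < k) : Nat.card (pmSet I) = 2 * I.card := by
  rw [pmSet_eq, Nat.card_coe_set_eq, Set.ncard_union_eq (disjoint_neg_of_pos hI) I.finite_toSet
    I.finite_toSet.neg, Set.ncard_neg, Set.ncard_coe_finset, two_mul]

theorem fixesOutside_permMinus (hγ : FixesOutside γ I) : FixesOutside (permMinus γ) (pmSet I) :=
  fun k hk => by rw [permMinus_apply, hγ (-k) fun h => hk (Or.inr h), neg_neg]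

theorem fixesOutside_mul_permMinus_inv (hγ : FixesOutside γ I) :
    FixesOutside (γ * (permMinus γ)⁻¹) (pmSet I) :=
  (hγ.mono fun _ hk => Or.inl hk).mul (fixesOutside_permMinus hγ).inv

theorem mul_permMinus_inv_apply_of_mem (hI : ∀ k ∈ I, 0 < k) (hγ : FixesOutside γ I)
    (hk : k ∈ I) : (γ * (permMinus γ)⁻¹) k = γ k := by
  rw [mul_apply, permMinus_inv_apply, hγ.inv _ (neg_notMem_of_pos hI hk), neg_neg]

theorem mul_permMinus_inv_inv_apply_of_mem (hI : ∀ k ∈ I, 0 < k) (hγ : FixesOutside γ I)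
    (hk : k ∈ I) : (γ * (permMinus γ)⁻¹)⁻¹ k = γ⁻¹ k := by
  rw [mul_inv_rev, inv_inv, mul_apply, permMinus_apply,
    hγ _ (neg_notMem_of_pos hI (hγ.inv.apply_mem hk)), neg_neg]

theorem mul_permMinus_inv_apply_mem_iff (hI : ∀ k ∈ I, 0 < k) (hγ : FixesOutside γ I)
    {V : Finset ℤ} (hVI : V ⊆ I) (hγV : ∀ x, γ x ∈ V ↔ x ∈ V) (x : ℤ) :
    (γ * (permMinus γ)⁻¹) x ∈ (V : Set ℤ) ↔ x ∈ (V : Set ℤ) := by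
  refine apply_mem_iff_of_mapsTo (fun y hy => ?_) (fun y hy => ?_) x
  · rw [mul_permMinus_inv_apply_of_mem hI hγ (hVI hy)]
    exact (hγV y).2 hy
  · rw [mul_permMinus_inv_inv_apply_of_mem hI hγ (hVI hy)]
    exact (inv_apply_mem_iff (B := (V : Set ℤ)) hγV y).2 hy

theorem apply_mem_neg_iff_of_neg_conj {σ : Perm ℤ} {B : Set ℤ}
    (hσ : Equiv.neg ℤ * σ * Equiv.neg ℤ = σ⁻¹) (h : ∀ x, σ x ∈ B ↔ x ∈ B) (x : ℤ) :
    σ x ∈ -B ↔ x ∈ -B := by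
  rw [Set.mem_neg, Set.mem_neg, neg_apply_of_neg_conj hσ, inv_apply_mem_iff h]

theorem apply_mem_iff_of_not_sameCycle (hunion : V₁ ∪ V₂ = I) (hγ : FixesOutside γ I)
    (hγ12 : ∀ a ∈ V₁, ∀ b ∈ V₂, ¬γ.SameCycle a b) (x : ℤ) : γ x ∈ V₁ ↔ x ∈ V₁ := by
  have hV₁I : V₁ ⊆ I := hunion ▸ Finset.subset_union_left
  have key : ∀ a ∈ V₁, ∀ b ∈ I, γ.SameCycle a b → b ∈ V₁ := fun a ha b hb hab => by
    rw [← hunion, Finset.mem_union] at hb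
    exact hb.resolve_right fun hb₂ => hγ12 a ha b hb₂ hab
  exact apply_mem_iff_of_mapsTo (B := (V₁ : Set ℤ))
    (fun a ha => key a ha _ (hγ.apply_mem (hV₁I ha)) ⟨1, rfl⟩)
    (fun a ha => key a ha _ (hγ.inv.apply_mem (hV₁I ha)) ⟨-1, by simp⟩) x

theorem sameCycle_mul_permMinus_inv_iff (hI : ∀ k ∈ I, 0 < k) (hγ : FixesOutside γ I) {a b : ℤ}
    (ha : a ∈ I) (hb : b ∈ I) : (γ * (permMinus γ)⁻¹).SameCycle a b ↔ γ.SameCycle a b :=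
  sameCycle_iff_of_eqOn (mul_permMinus_inv_apply_mem_iff hI hγ subset_rfl hγ.apply_mem_iff)
    hγ.apply_mem_iff (fun _ hk => mul_permMinus_inv_apply_of_mem hI hγ hk) ha hb

theorem classCount_neg_of_neg_conj {σ g : Perm ℤ} {A : Set ℤ}
    (hconj : Equiv.neg ℤ * σ * Equiv.neg ℤ = g * σ⁻¹ * g⁻¹) (hg : g '' A = A) :
    classCount σ.SameCycle (-A) = classCount σ.SameCycle A := by
  rw [← Set.image_neg_eq_neg]
  exact classCount_image_of_conj_eq (δ := Equiv.neg ℤ) hconj hg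

theorem classCount_mul_permMinus_inv_pmSet (hI : ∀ k ∈ I, 0 < k) (hunion : V₁ ∪ V₂ = I)
    (hVdisj : Disjoint V₁ V₂) (h1 : V₁.Nonempty) (h2 : V₂.Nonempty) (hγ : FixesOutside γ I)
    (hγ1 : ∀ a ∈ V₁, ∀ b ∈ V₁, γ.SameCycle a b) (hγ2 : ∀ a ∈ V₂, ∀ b ∈ V₂, γ.SameCycle a b)
    (hγ12 : ∀ a ∈ V₁, ∀ b ∈ V₂, ¬γ.SameCycle a b) :
    classCount (γ * (permMinus γ)⁻¹).SameCycle (pmSet I) = 4 := by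
  set ρ := γ * (permMinus γ)⁻¹
  have hV₁I : V₁ ⊆ I := hunion ▸ Finset.subset_union_left
  have hV₂I : V₂ ⊆ I := hunion ▸ Finset.subset_union_right
  have hρV₁ := mul_permMinus_inv_apply_mem_iff hI hγ hV₁I
    (apply_mem_iff_of_not_sameCycle hunion hγ hγ12)
  have hρI := mul_permMinus_inv_apply_mem_iff hI hγ subset_rfl hγ.apply_mem_iff
  have hblock : ∀ V ⊆ I, V.Nonempty → (∀ a ∈ V, ∀ b ∈ V, γ.SameCycle a b) →
      classCount ρ.SameCycle V = 1 := fun V hVI hne hV =>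
    classCount_eq_one hne fun a ha b hb =>
      (sameCycle_mul_permMinus_inv_iff hI hγ (hVI ha) (hVI hb)).2 (hV a ha b hb)
  have hcountI : classCount ρ.SameCycle I = 2 := by
    rw [← hunion, Finset.coe_union, classCount_union (SameCycle.equivalence ρ) V₁.finite_toSet
      V₂.finite_toSet fun a ha b hb hab =>
        Finset.disjoint_left.1 hVdisj ((hab.mem_iff_mem hρV₁).1 ha) hb,
      hblock V₁ hV₁I h1 hγ1, hblock V₂ hV₂I h2 hγ2]
  rw [pmSet_eq, classCount_union (SameCycle.equivalence ρ) I.finite_toSet I.finite_toSet.neg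
    fun a ha b hb hab =>
      Set.disjoint_left.1 (disjoint_neg_of_pos hI) ((hab.mem_iff_mem hρI).1 ha) hb,
    classCount_neg_of_neg_conj (g := 1)
      (by rw [one_mul, inv_one, mul_one]; exact neg_mul_mul_permMinus_inv_mul_neg γ)
      (Set.image_id _), hcountI]

theorem chi_eq_two_iff (hγ : FixesOutside γ I)
    (hρ : classCount (γ * (permMinus γ)⁻¹).SameCycle (pmSet I) = 4) :
    chi I γ π = 2 ↔ classCount π.SameCycle (pmSet I) +
      classCount ((γ * (permMinus γ)⁻¹)⁻¹ * π⁻¹).SameCycle (pmSet I) = 2 * I.card := by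
  have hconj : permMinus γ * (γ⁻¹ * π⁻¹ * permMinus γ) * (permMinus γ)⁻¹ =
      (γ * (permMinus γ)⁻¹)⁻¹ * π⁻¹ := by group
  rw [chi, orbitCountOn_eq_classCount, orbitCountOn_eq_classCount, orbitCountOn_eq_classCount,
    ← classCount_conj (permMinus γ) (γ⁻¹ * π⁻¹ * permMinus γ), hconj,
    (fixesOutside_permMinus hγ).image_eq, hρ]
  rw [← Nat.cast_inj (R := ℚ)]
  push_cast
  constructor <;> intro h <;> linarith

theorem signedUnion_union_neg (hunion : V₁ ∪ V₂ = I) {ε : ℤ} (hε : ε = 1 ∨ ε = -1) :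
    signedUnion V₁ V₂ ε ∪ -signedUnion V₁ V₂ ε = pmSet I := by
  ext k
  simp only [signedUnion, pmSet, Set.mem_union, Set.mem_neg, Set.mem_ofPred_eq, ← hunion,
    Finset.mem_union]
  rcases hε with rfl | rfl
  · simp only [one_mul]
  · simp only [neg_one_mul, neg_neg]
    tauto

theorem disjoint_signedUnion_neg (hI : ∀ k ∈ I, 0 < k) (hunion : V₁ ∪ V₂ = I)
    (hVdisj : Disjoint V₁ V₂) {ε : ℤ} (hε : ε = 1 ∨ ε = -1) :
    Disjoint (signedUnion V₁ V₂ ε) (-signedUnion V₁ V₂ ε) := by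
  have hpos : ∀ k, k ∈ V₁ ∨ k ∈ V₂ → 0 < k := fun k hk => hI k (hunion ▸ Finset.mem_union.2 hk)
  refine Set.disjoint_left.2 fun k hk hk' => ?_
  simp only [signedUnion, Set.mem_neg, Set.mem_ofPred_eq] at hk hk'
  rcases hε with rfl | rfl <;> simp only [one_mul, neg_one_mul, neg_neg] at hk hk' <;>
    rcases hk with h | h <;> rcases hk' with h' | h' <;>
    first
    | exact Finset.disjoint_left.1 hVdisj h h'
    | exact Finset.disjoint_left.1 hVdisj h' h
    | linarith [hpos k (by tauto), hpos (-k) (by tauto)]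

theorem mul_permMinus_inv_apply_mem_signedUnion_iff (hI : ∀ k ∈ I, 0 < k)
    (hunion : V₁ ∪ V₂ = I) (hγ : FixesOutside γ I) (hγ12 : ∀ a ∈ V₁, ∀ b ∈ V₂, ¬γ.SameCycle a b)
    {ε : ℤ} (hε : ε = 1 ∨ ε = -1) (x : ℤ) :
    (γ * (permMinus γ)⁻¹) x ∈ signedUnion V₁ V₂ ε ↔ x ∈ signedUnion V₁ V₂ ε := by
  have hV₁ := mul_permMinus_inv_apply_mem_iff hI hγ (hunion ▸ Finset.subset_union_left)
    (apply_mem_iff_of_not_sameCycle hunion hγ hγ12) x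
  have hV₂ := mul_permMinus_inv_apply_mem_iff hI hγ (hunion ▸ Finset.subset_union_right)
    (apply_mem_iff_of_not_sameCycle ((Finset.union_comm _ _).trans hunion) hγ
      fun a ha b hb hab => hγ12 b hb a ha hab.symm)
  rcases hε with rfl | rfl
  · simp only [signedUnion, Set.mem_ofPred_eq, one_mul]
    exact or_congr hV₁ (hV₂ x)
  · simp only [signedUnion, Set.mem_ofPred_eq, neg_one_mul]
    exact or_congr hV₁ (apply_mem_neg_iff_of_neg_conj (neg_mul_mul_permMinus_inv_mul_neg γ) hV₂ x)

theorem classCount_union_neg_add {A : Set ℤ} (hA : A.Finite) (hAd : Disjoint A (-A))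
    {ρ π : Perm ℤ} (hρ : Equiv.neg ℤ * ρ * Equiv.neg ℤ = ρ⁻¹)
    (hπ : Equiv.neg ℤ * π * Equiv.neg ℤ = π⁻¹) (hπA : FixesOutside π (A ∪ -A))
    (hρA : ∀ x, ρ x ∈ A ↔ x ∈ A) (hno : ∀ a b, a ∈ A → b ∈ A → ¬π.SameCycle a (-b)) :
    classCount π.SameCycle (A ∪ -A) + classCount (ρ⁻¹ * π⁻¹).SameCycle (A ∪ -A) =
      2 * (classCount π.SameCycle A + classCount (ρ⁻¹ * π⁻¹).SameCycle A) := by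
  have hπA' : ∀ x, π x ∈ A ↔ x ∈ A := by
    refine apply_mem_iff_of_mapsTo (fun x hx => ?_) (fun x hx => ?_)
    · refine (hπA.apply_mem (Or.inl hx)).resolve_right fun h => hno x _ hx h ?_
      rw [neg_neg]
      exact ⟨1, rfl⟩
    · refine (hπA.inv.apply_mem (Or.inl hx)).resolve_right fun h => hno x _ hx h ?_
      rw [neg_neg]
      exact ⟨-1, by simp⟩
  have hτA : ∀ x, (ρ⁻¹ * π⁻¹) x ∈ A ↔ x ∈ A := fun x => by
    rw [mul_apply, inv_apply_mem_iff hρA, inv_apply_mem_iff hπA']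
  have hsplit : ∀ σ : Perm ℤ, (∀ x, σ x ∈ A ↔ x ∈ A) → classCount σ.SameCycle (A ∪ -A) =
      classCount σ.SameCycle A + classCount σ.SameCycle (-A) := fun σ hσ =>
    classCount_union (SameCycle.equivalence σ) hA hA.neg fun a ha b hb hab =>
      Set.disjoint_left.1 hAd ((hab.mem_iff_mem hσ).1 ha) hb
  have hτconj : Equiv.neg ℤ * (ρ⁻¹ * π⁻¹) * Equiv.neg ℤ = ρ * (ρ⁻¹ * π⁻¹)⁻¹ * ρ⁻¹ := by
    ext x
    have := neg_inv_apply_of_neg_conj hρ (π⁻¹ (-x))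
    rw [neg_inv_apply_of_neg_conj hπ, neg_neg] at this
    simpa using this
  rw [hsplit π hπA', hsplit _ hτA,
    classCount_neg_of_neg_conj (g := 1) (by rw [one_mul, inv_one, mul_one]; exact hπ)
      (Set.image_id _),
    classCount_neg_of_neg_conj hτconj (image_eq_of_apply_mem_iff hρA)]
  ring

theorem classCount_pmSet_add_eq_two_mul (hI : ∀ k ∈ I, 0 < k) (hunion : V₁ ∪ V₂ = I)
    (hVdisj : Disjoint V₁ V₂) (hγ : FixesOutside γ I)
    (hγ12 : ∀ a ∈ V₁, ∀ b ∈ V₂, ¬γ.SameCycle a b) (hπ : Equiv.neg ℤ * π * Equiv.neg ℤ = π⁻¹)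
    (hπX : FixesOutside π (pmSet I)) {ε : ℤ} (hε : ε = 1 ∨ ε = -1)
    (hno : ∀ a b, a ∈ signedUnion V₁ V₂ ε → b ∈ signedUnion V₁ V₂ ε → ¬π.SameCycle a (-b)) :
    classCount π.SameCycle (pmSet I) +
        classCount ((γ * (permMinus γ)⁻¹)⁻¹ * π⁻¹).SameCycle (pmSet I) =
      2 * (classCount π.SameCycle (signedUnion V₁ V₂ ε) +
        classCount ((γ * (permMinus γ)⁻¹)⁻¹ * π⁻¹).SameCycle (signedUnion V₁ V₂ ε)) := by
  rw [← signedUnion_union_neg hunion hε] at hπX ⊢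
  exact classCount_union_neg_add ((finite_pmSet I).subset (signedUnion_union_neg hunion hε ▸
    Set.subset_union_left)) (disjoint_signedUnion_neg hI hunion hVdisj hε)
    (neg_mul_mul_permMinus_inv_mul_neg γ) hπ hπX
    (mul_permMinus_inv_apply_mem_signedUnion_iff hI hunion hγ hγ12 hε) hno

theorem jointRel_neg {ρ π : Perm ℤ} (hρ : Equiv.neg ℤ * ρ * Equiv.neg ℤ = ρ⁻¹)
    (hπ : Equiv.neg ℤ * π * Equiv.neg ℤ = π⁻¹) {a b : ℤ} (h : jointRel (ρ⁻¹ * π⁻¹) π a b) :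
    jointRel (ρ⁻¹ * π⁻¹) π (-a) (-b) := by
  have hJ := jointRel_equivalence (ρ⁻¹ * π⁻¹) π
  refine jointRel_le (R := jointRel (ρ⁻¹ * π⁻¹) π on fun x => -x) (hJ.comap _) (fun u => ?_)
    (fun u => ?_) h
  · change jointRel _ _ (-u) (-(ρ⁻¹ * π⁻¹) u)
    rw [mul_apply, neg_inv_apply_of_neg_conj hρ, neg_inv_apply_of_neg_conj hπ]
    exact hJ.trans (jointRel_apply_right _) (SameCycle.jointRel_inv_mul_inv ⟨1, rfl⟩)
  · change jointRel _ _ (-u) (-π u)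
    rw [neg_apply_of_neg_conj hπ]
    exact hJ.symm (by simpa using jointRel_apply_right (σ := ρ⁻¹ * π⁻¹) (τ := π) (π⁻¹ (-u)))

theorem jointRel_mul_sign {ρ π : Perm ℤ} (hρ : Equiv.neg ℤ * ρ * Equiv.neg ℤ = ρ⁻¹)
    (hπ : Equiv.neg ℤ * π * Equiv.neg ℤ = π⁻¹) {s a b : ℤ} (hs : s = 1 ∨ s = -1)
    (h : jointRel (ρ⁻¹ * π⁻¹) π a b) : jointRel (ρ⁻¹ * π⁻¹) π (s * a) (s * b) := by
  rcases hs with rfl | rfl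
  · simpa using h
  · simpa using jointRel_neg hρ hπ h

theorem classCount_union_neg_eq_one {R : ℤ → ℤ → Prop} (hR : Equivalence R)
    (hneg : ∀ a b, R a b → R (-a) (-b)) {A : Set ℤ} {x : ℤ} (hx : x ∈ A)
    (hA : ∀ u ∈ A, R u x) (hxx : R x (-x)) : classCount R (A ∪ -A) = 1 := by
  have hall : ∀ u ∈ A ∪ -A, R u x := by
    rintro u (hu | hu)
    · exact hA u hu
    · have := hneg _ _ (hA _ hu)
      rw [neg_neg] at this
      exact hR.trans this (hR.symm hxx)
  exact classCount_eq_one ⟨x, .inl hx⟩ fun a ha b hb => hR.trans (hall a ha) (hR.symm (hall b hb))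

theorem exists_sign_forall_jointRel {ρ π : Perm ℤ} (hρ : Equiv.neg ℤ * ρ * Equiv.neg ℤ = ρ⁻¹)
    (hπ : Equiv.neg ℤ * π * Equiv.neg ℤ = π⁻¹) (hρ₁ : ∀ a ∈ V₁, ∀ b ∈ V₁, ρ.SameCycle a b)
    (hρ₂ : ∀ a ∈ V₂, ∀ b ∈ V₂, ρ.SameCycle a b)
    (hconn : ∃ a b : ℤ, (a ∈ V₁ ∨ -a ∈ V₁) ∧ (b ∈ V₂ ∨ -b ∈ V₂) ∧ π.SameCycle a b)
    {x : ℤ} (hx : x ∈ V₁) :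
    ∃ ε : ℤ, (ε = 1 ∨ ε = -1) ∧ ∀ u ∈ signedUnion V₁ V₂ ε, jointRel (ρ⁻¹ * π⁻¹) π u x := by
  have hJ := jointRel_equivalence (ρ⁻¹ * π⁻¹) π
  have hsign : ∀ {V : Finset ℤ} {a : ℤ}, a ∈ V ∨ -a ∈ V →
      ∃ s : ℤ, (s = 1 ∨ s = -1) ∧ s * a ∈ V := by
    rintro V a (h | h)
    exacts [⟨1, .inl rfl, by simpa⟩, ⟨-1, .inr rfl, by simpa⟩]
  obtain ⟨a, b, ha, hb, hab⟩ := hconn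
  obtain ⟨s, hs, has⟩ := hsign ha
  obtain ⟨t, ht, hbt⟩ := hsign hb
  have hst : s * t = 1 ∨ s * t = -1 := by
    rcases hs with rfl | rfl <;> rcases ht with rfl | rfl <;> simp
  refine ⟨s * t, hst, ?_⟩
  rintro u (hu | hu)
  · exact (hρ₁ u hu x hx).jointRel_inv_mul_inv
  · have hub := jointRel_mul_sign hρ hπ hst (hρ₂ _ hu _ hbt).jointRel_inv_mul_inv
    have e₁ : s * t * (s * t * u) = u := by
      rcases hs with rfl | rfl <;> rcases ht with rfl | rfl <;> ring
    have e₂ : s * t * (t * b) = s * b := by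
      rcases ht with rfl | rfl <;> ring
    rw [e₁, e₂] at hub
    exact hJ.trans hub (hJ.trans (hJ.symm (jointRel_mul_sign hρ hπ hs hab.jointRel_right))
      (hρ₁ _ has x hx).jointRel_inv_mul_inv)

theorem exists_sign_not_sameCycle_neg (hI : ∀ k ∈ I, 0 < k) (hunion : V₁ ∪ V₂ = I)
    (hVdisj : Disjoint V₁ V₂) (h1 : V₁.Nonempty) (h2 : V₂.Nonempty) (hγ : FixesOutside γ I)
    (hγ1 : ∀ a ∈ V₁, ∀ b ∈ V₁, γ.SameCycle a b) (hγ2 : ∀ a ∈ V₂, ∀ b ∈ V₂, γ.SameCycle a b)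
    (hγ12 : ∀ a ∈ V₁, ∀ b ∈ V₂, ¬γ.SameCycle a b)
    (hπ : Equiv.neg ℤ * π * Equiv.neg ℤ = π⁻¹) (hπX : FixesOutside π (pmSet I))
    (hconn : ∃ a b : ℤ, (a ∈ V₁ ∨ -a ∈ V₁) ∧ (b ∈ V₂ ∨ -b ∈ V₂) ∧ π.SameCycle a b)
    (hsum : classCount π.SameCycle (pmSet I) +
      classCount ((γ * (permMinus γ)⁻¹)⁻¹ * π⁻¹).SameCycle (pmSet I) = 2 * I.card) :
    ∃ ε : ℤ, (ε = 1 ∨ ε = -1) ∧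
      ∀ a b : ℤ, a ∈ signedUnion V₁ V₂ ε → b ∈ signedUnion V₁ V₂ ε → ¬π.SameCycle a (-b) := by
  have hρ := neg_mul_mul_permMinus_inv_mul_neg γ
  have hJ := jointRel_equivalence ((γ * (permMinus γ)⁻¹)⁻¹ * π⁻¹) π
  have hgenus := classCount_add_add_le (finite_pmSet I)
    ((fixesOutside_mul_permMinus_inv hγ).inv.mul hπX.inv) hπX
  rw [inv_mul_cancel_right, classCount_inv,
    classCount_mul_permMinus_inv_pmSet hI hunion hVdisj h1 h2 hγ hγ1 hγ2 hγ12,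
    card_pmSet hI] at hgenus
  have hρV : ∀ V ⊆ I, (∀ a ∈ V, ∀ b ∈ V, γ.SameCycle a b) →
      ∀ a ∈ V, ∀ b ∈ V, (γ * (permMinus γ)⁻¹).SameCycle a b := fun V hVI hV a ha b hb =>
    (sameCycle_mul_permMinus_inv_iff hI hγ (hVI ha) (hVI hb)).2 (hV a ha b hb)
  obtain ⟨x, hx⟩ := h1
  obtain ⟨ε, hε, hJA⟩ := exists_sign_forall_jointRel hρ hπ
    (hρV V₁ (hunion ▸ Finset.subset_union_left) hγ1)
    (hρV V₂ (hunion ▸ Finset.subset_union_right) hγ2) hconn hx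
  refine ⟨ε, hε, fun a b ha hb hab => ?_⟩
  have hxx : jointRel ((γ * (permMinus γ)⁻¹)⁻¹ * π⁻¹) π x (-x) := hJ.trans (hJ.symm (hJA a ha))
    (hJ.trans hab.jointRel_right (jointRel_neg hρ hπ (hJA b hb)))
  have hone := classCount_union_neg_eq_one hJ (fun _ _ => jointRel_neg hρ hπ) (Or.inl hx) hJA hxx
  rw [signedUnion_union_neg hunion hε] at hone
  omega

end TwoOrbits

/-- for `γ` with exactly two orbits `V₁, V₂` on `I` and `π` a
premap on `±I` connecting `±V₁` and `±V₂`: `χ(γ,π) = 2` iff for some sign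
`ε = ±1`, `π` does not connect `A = V₁ ∪ εV₂` to `−A`, and the permutation
induced by `π` on `A` satisfies the (Mingo–Nica) annular-noncrossing count
`#(π|) + #((γ₊γ₋⁻¹)|⁻¹ π|⁻¹) = |I|`.  (Under the no-connect condition, the
permutations involved preserve `A`, so induced permutations are restrictions
and their cycle counts are orbit counts on `A`.) -/
theorem statement9 (I V₁ V₂ : Finset ℤ) (hI : ∀ k ∈ I, 0 < k)
    (hunion : V₁ ∪ V₂ = I) (hVdisj : Disjoint V₁ V₂)
    (h1 : V₁.Nonempty) (h2 : V₂.Nonempty)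
    (γ π : Equiv.Perm ℤ)
    (hγs : ∀ k : ℤ, k ∉ I → γ k = k)
    (hγ1 : ∀ a ∈ V₁, ∀ b ∈ V₁, γ.SameCycle a b)
    (hγ2 : ∀ a ∈ V₂, ∀ b ∈ V₂, γ.SameCycle a b)
    (hγ12 : ∀ a ∈ V₁, ∀ b ∈ V₂, ¬ γ.SameCycle a b)
    (hπ : IsPremap π)
    (hπs : ∀ k : ℤ, k ∉ I → -k ∉ I → π k = k)
    (hconn : ∃ a b : ℤ, (a ∈ V₁ ∨ -a ∈ V₁) ∧ (b ∈ V₂ ∨ -b ∈ V₂) ∧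
      π.SameCycle a b) :
    chi I γ π = 2 ↔
      ∃ ε : ℤ, (ε = 1 ∨ ε = -1) ∧
        (∀ a b : ℤ, (a ∈ V₁ ∨ ε * a ∈ V₂) → (b ∈ V₁ ∨ ε * b ∈ V₂) →
          ¬ π.SameCycle a (-b)) ∧
        orbitCountOn π {k : ℤ | k ∈ V₁ ∨ ε * k ∈ V₂} +
            orbitCountOn ((γ * (permMinus γ)⁻¹)⁻¹ * π⁻¹)
              {k : ℤ | k ∈ V₁ ∨ ε * k ∈ V₂} = I.card := by
  have hπX : Equiv.Perm.FixesOutside π (pmSet I) := fun k hk =>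
    hπs k (hk <| .inl ·) (hk <| .inr ·)
  simp only [orbitCountOn_eq_classCount]
  rw [chi_eq_two_iff hγs
    (classCount_mul_permMinus_inv_pmSet hI hunion hVdisj h1 h2 hγs hγ1 hγ2 hγ12)]
  constructor
  · intro hsum
    obtain ⟨ε, hε, hno⟩ := exists_sign_not_sameCycle_neg hI hunion hVdisj h1 h2 hγs hγ1 hγ2
      hγ12 hπ.1 hπX hconn hsum
    have := classCount_pmSet_add_eq_two_mul hI hunion hVdisj hγs hγ12 hπ.1 hπX hε hno
    unfold signedUnion at this
    exact ⟨ε, hε, hno, by omega⟩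
  · rintro ⟨ε, hε, hno, hcount⟩
    have := classCount_pmSet_add_eq_two_mul hI hunion hVdisj hγs hγ12 hπ.1 hπX hε hno
    unfold signedUnion at this
    omega
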